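/- arXiv:2206.15121 — 3 statements merged into one kernel-verified Lean document; each statement's English description precedes it below -/
import Mathlib

section
/- Suppose Ω ⊂ ℝⁿ is open and φ ∈ Φ_w(Ω) satisfies (A1)_Ω with constant β ∈ (0,1). Then φ satisfies (A1) with constant β^(2·ω_n^(−1/n)+1), where ω_n is the volume of the unit ball in ℝⁿ. Concretely: for every ball B with |B| ≤ 1, all x,y ∈ B ∩ Ω, and all t ∈ [1, 1/|B|], we have β^(2ω_n^(−1/n)+1) · φ⁻¹(x,t) ≤ φ⁻¹(y,t). -/
/-!
Write `ω` for the measure of the unit ball and `d` for the dimension. A ball `B` of radius `R` has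
`|B| = ω Rᵈ`, so `t ≤ 1/|B|` gives `t^{1/d} ≤ ω^{-1/d} / R`, while two points of `B` are at distance
less than `2R`. Hence the exponent `|x - y| t^{1/d} + 1` in `(A1)_Ω` is at most `2 ω^{-1/d} + 1`, and
since `β < 1` the constant `β^{2 ω^{-1/d} + 1}` is smaller than the one `(A1)_Ω` provides.
-/

open Real Set Metric MeasureTheory Module

section HaarBall

variable {E : Type*} [NormedAddCommGroup E] [NormedSpace ℝ E] [FiniteDimensional ℝ E]
  [MeasurableSpace E] [BorelSpace E] (μ : Measure E) [μ.IsAddHaarMeasure]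

lemma rpow_le_of_le_inv_measure_ball [Nontrivial E] {z : E} {R t : ℝ} (hR : 0 < R) (ht : 0 ≤ t)
    (htle : t ≤ (μ (ball z R)).toReal⁻¹) :
    t ^ (1 / finrank ℝ E : ℝ) ≤ R⁻¹ * (μ (ball (0 : E) 1)).toReal ^ (-1 / finrank ℝ E : ℝ) := by
  set d : ℝ := (finrank ℝ E : ℝ)
  set ω := (μ (ball (0 : E) 1)).toReal
  have hd : 0 < d := Nat.cast_pos.mpr finrank_pos
  have hω : 0 < ω := ENNReal.toReal_pos (measure_ball_pos μ 0 one_pos).ne' measure_ball_lt_top.ne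
  have hvol : (μ (ball z R)).toReal = R ^ d * ω := by
    rw [Measure.addHaar_ball μ z hR.le, ENNReal.toReal_mul, ENNReal.toReal_ofReal (by positivity),
      ← rpow_natCast]
  calc t ^ (1 / d) ≤ ((μ (ball z R)).toReal⁻¹) ^ (1 / d) := by gcongr
    _ = R⁻¹ * ω ^ (-1 / d) := by
      rw [hvol, mul_inv, mul_rpow (by positivity) (by positivity), ← rpow_neg hR.le,
        ← rpow_mul hR.le, ← rpow_neg_one ω, ← rpow_mul hω.le, neg_mul, ← div_eq_mul_one_div,
        div_self hd.ne', rpow_neg_one, neg_one_mul, neg_div]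

lemma dist_mul_rpow_le_of_le_inv_measure_ball {z x y : E} {R t : ℝ} (hx : x ∈ ball z R)
    (hy : y ∈ ball z R) (ht : 0 ≤ t) (htle : t ≤ (μ (ball z R)).toReal⁻¹) :
    dist x y * t ^ (1 / finrank ℝ E : ℝ) ≤
      2 * (μ (ball (0 : E) 1)).toReal ^ (-1 / finrank ℝ E : ℝ) := by
  rcases subsingleton_or_nontrivial E with hE | hE
  · rw [Subsingleton.elim x y, dist_self, zero_mul]
    positivity
  have hR : 0 < R := pos_of_mem_ball hx
  have hdist : dist x y ≤ 2 * R := by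
    linarith [dist_triangle_right x y z, mem_ball.mp hx, mem_ball.mp hy]
  calc dist x y * t ^ (1 / finrank ℝ E : ℝ)
      ≤ 2 * R * (R⁻¹ * (μ (ball (0 : E) 1)).toReal ^ (-1 / finrank ℝ E : ℝ)) := by
        gcongr
        exact rpow_le_of_le_inv_measure_ball μ hR ht htle
    _ = 2 * (μ (ball (0 : E) 1)).toReal ^ (-1 / finrank ℝ E : ℝ) := by field_simp

end HaarBall

theorem stmt_5_general (n : ℕ) (Ω : Set (EuclideanSpace ℝ (Fin n)))
    (phiInv : EuclideanSpace ℝ (Fin n) → ℝ → ℝ)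
    (hnonneg : ∀ x t, 0 ≤ phiInv x t)
    (β : ℝ) (hβ : β ∈ Set.Ioo (0:ℝ) 1)
    -- (A1)_Ω with constant β
    (hA1Ω : ∀ x ∈ Ω, ∀ y ∈ Ω, ∀ t : ℝ, 1 ≤ t →
      β ^ (dist x y * t ^ ((1:ℝ)/n) + 1) * phiInv x t ≤ phiInv y t) :
    -- (A1) with constant β ^ (2 ω_n^{-1/n} + 1), ω_n the volume of the unit ball
    ∀ z : EuclideanSpace ℝ (Fin n), ∀ R : ℝ, volume (Metric.ball z R) ≤ 1 →
      ∀ x ∈ Metric.ball z R ∩ Ω, ∀ y ∈ Metric.ball z R ∩ Ω,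
        ∀ t : ℝ, 1 ≤ t → t ≤ ((volume (Metric.ball z R)).toReal)⁻¹ →
          β ^ (2 * ((volume (Metric.ball (0 : EuclideanSpace ℝ (Fin n)) 1)).toReal)
                ^ (-(1:ℝ)/n) + 1) * phiInv x t ≤ phiInv y t := by
  rintro z R - x ⟨hxB, hxΩ⟩ y ⟨hyB, hyΩ⟩ t ht htle
  have hexp := dist_mul_rpow_le_of_le_inv_measure_ball volume hxB hyB (by positivity) htle
  rw [finrank_euclideanSpace_fin] at hexp
  calc β ^ (2 * (volume (ball (0 : EuclideanSpace ℝ (Fin n)) 1)).toReal ^ (-(1:ℝ)/n) + 1)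
        * phiInv x t
      ≤ β ^ (dist x y * t ^ ((1:ℝ)/n) + 1) * phiInv x t := by
        gcongr ?_ * _
        · exact hnonneg x t
        exact rpow_le_rpow_of_exponent_ge hβ.1 hβ.2.le (by linarith)
    _ ≤ phiInv y t := hA1Ω x hxΩ y hyΩ t ht

theorem stmt_5 (n : ℕ) (hn : 1 ≤ n) (Ω : Set (EuclideanSpace ℝ (Fin n))) (hΩ : IsOpen Ω)
    (phiInv : EuclideanSpace ℝ (Fin n) → ℝ → ℝ)
    (hnonneg : ∀ x t, 0 ≤ phiInv x t)
    (β : ℝ) (hβ : β ∈ Set.Ioo (0:ℝ) 1)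
    -- (A1)_Ω with constant β
    (hA1Ω : ∀ x ∈ Ω, ∀ y ∈ Ω, ∀ t : ℝ, 1 ≤ t →
      β ^ (dist x y * t ^ ((1:ℝ)/n) + 1) * phiInv x t ≤ phiInv y t) :
    -- (A1) with constant β ^ (2 ω_n^{-1/n} + 1), ω_n the volume of the unit ball
    ∀ z : EuclideanSpace ℝ (Fin n), ∀ R : ℝ, volume (Metric.ball z R) ≤ 1 →
      ∀ x ∈ Metric.ball z R ∩ Ω, ∀ y ∈ Metric.ball z R ∩ Ω,
        ∀ t : ℝ, 1 ≤ t → t ≤ ((volume (Metric.ball z R)).toReal)⁻¹ →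
          β ^ (2 * ((volume (Metric.ball (0 : EuclideanSpace ℝ (Fin n)) 1)).toReal)
                ^ (-(1:ℝ)/n) + 1) * phiInv x t ≤ phiInv y t :=
  stmt_5_general n Ω phiInv hnonneg β hβ hA1Ω
end

section
/- Let φ⁻¹ be defined on Ω = U ∪ V ∪ W ⊂ ℝ² (as in the example: φ⁻¹(x,y,t) = y·t if x > 1 and y > 1, else t). Then φ⁻¹ does not satisfy (A1)_Ω: there is no β ∈ (0,1) such that β^(|p−q|·t^(1/2)+1)·φ⁻¹(p,t) ≤ φ⁻¹(q,t) for all p,q ∈ Ω and t ≥ 1. Specifically, for any β ∈ (0,1), taking p = (2,y), q = (−2,y) with y > 1 and t = 1 gives β⁵·y ≤ 1, which fails for y > β⁻⁵. -/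
open Real Set Metric

/-
The weight φ⁻¹ jumps by the unbounded factor y across the gap between U and V, while the two points
(±2, y) stay at distance 4: with t = 1, (A1)_Ω would force β⁵ y ≤ 1 for every y > 1.
-/

lemma exists_one_lt_and_one_lt_mul {a : ℝ} (ha : 0 < a) : ∃ y : ℝ, 1 < y ∧ 1 < a * y :=
  ⟨1 + a⁻¹, by linarith [inv_pos.mpr ha], by rw [mul_add, mul_inv_cancel₀ ha.ne']; linarith⟩

lemma EuclideanSpace.dist_eq_abs_of_apply_one_eq {p q : EuclideanSpace ℝ (Fin 2)}
    (h : p 1 = q 1) : dist p q = |p 0 - q 0| := by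
  rw [EuclideanSpace.dist_eq, Fin.sum_univ_two, h, dist_self, Real.dist_eq, sq_abs,
    zero_pow two_ne_zero, add_zero, Real.sqrt_sq_eq_abs]

theorem stmt_12_general
    (U V W Ω : Set (EuclideanSpace ℝ (Fin 2)))
    (hU : U = {p | -3 < p 0 ∧ p 0 < -1 ∧ -1 < p 1})
    (hV : V = {p | 1 < p 0 ∧ p 0 < 3 ∧ -1 < p 1})
    (hΩ : Ω = U ∪ V ∪ W)
    (phiInv : EuclideanSpace ℝ (Fin 2) → ℝ → ℝ)
    (hphiInv : ∀ p t, phiInv p t = if 1 < p 0 ∧ 1 < p 1 then p 1 * t else t) :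
    ¬ ∃ β ∈ Set.Ioo (0:ℝ) 1, ∀ p ∈ Ω, ∀ q ∈ Ω, ∀ t : ℝ, 1 ≤ t →
        β ^ (dist p q * t ^ ((1:ℝ)/2) + 1) * phiInv p t ≤ phiInv q t := by
  rintro ⟨β, ⟨hβ, -⟩, hA1⟩
  obtain ⟨y, hy, hβy⟩ := exists_one_lt_and_one_lt_mul (pow_pos hβ 5)
  have hp : !₂[2, y] ∈ Ω := by
    subst hΩ hV
    exact Or.inl (Or.inr ⟨by norm_num, by norm_num, by change -1 < y; linarith⟩)
  have hq : !₂[-2, y] ∈ Ω := by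
    subst hΩ hU
    exact Or.inl (Or.inl ⟨by norm_num, by norm_num, by change -1 < y; linarith⟩)
  have hdist : dist !₂[2, y] !₂[-2, y] = 4 := by
    rw [EuclideanSpace.dist_eq_abs_of_apply_one_eq (p := !₂[2, y]) (q := !₂[-2, y]) rfl]
    norm_num
  have h := hA1 _ hp _ hq 1 le_rfl
  rw [hdist, one_rpow, hphiInv, hphiInv, show (4:ℝ) * 1 + 1 = (5:ℕ) by norm_num,
    rpow_natCast] at h
  norm_num [hy] at h
  linarith

theorem stmt_12
    (U V W Ω : Set (EuclideanSpace ℝ (Fin 2)))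
    (hU : U = {p | -3 < p 0 ∧ p 0 < -1 ∧ -1 < p 1})
    (hV : V = {p | 1 < p 0 ∧ p 0 < 3 ∧ -1 < p 1})
    (hW : W = {p | -1 ≤ p 0 ∧ p 0 ≤ 1 ∧ -1 < p 1 ∧ p 1 < 0})
    (hΩ : Ω = U ∪ V ∪ W)
    (phiInv : EuclideanSpace ℝ (Fin 2) → ℝ → ℝ)
    (hphiInv : ∀ p t, phiInv p t = if 1 < p 0 ∧ 1 < p 1 then p 1 * t else t) :
    ¬ ∃ β ∈ Set.Ioo (0:ℝ) 1, ∀ p ∈ Ω, ∀ q ∈ Ω, ∀ t : ℝ, 1 ≤ t →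
        β ^ (dist p q * t ^ ((1:ℝ)/2) + 1) * phiInv p t ≤ phiInv q t :=
  stmt_12_general U V W Ω hU hV hΩ phiInv hphiInv
end

section
/- The set Ω = U ∪ V ∪ W ⊂ ℝ² from the example (U = (−3,−1)×(−1,∞), V = (1,3)×(−1,∞), W = [−1,1]×(−1,0)) is (√2, 1)-quasi-convex: any two points of Ω at distance less than 1 can be joined by a rectifiable curve in Ω of length at most √2 times their distance. -/
open Set Metric

/-- `Ω` is `(K,δ)`-quasi-convex; rectifiable curves are encoded by 1-Lipschitz
(arc-length) parametrizations. -/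
def QuasiConvex {n : ℕ} (Ω : Set (EuclideanSpace ℝ (Fin n))) (K δ : ℝ) : Prop :=
  ∀ x ∈ Ω, ∀ y ∈ Ω, dist x y < δ →
    ∃ ℓ : ℝ, 0 ≤ ℓ ∧ ℓ ≤ K * dist x y ∧
      ∃ γ : ℝ → EuclideanSpace ℝ (Fin n), LipschitzWith 1 γ ∧ γ 0 = x ∧ γ ℓ = y ∧
        ∀ s ∈ Set.Icc 0 ℓ, γ s ∈ Ω

/-!
Points of `Ω` at distance less than `1` are joined by the L-shaped polygon that descends
vertically from the higher point to the height of the lower one, then runs horizontally.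
The vertical legs stay in `Ω` because each of the three rectangles is closed under moving
down to any height above `-1`. The horizontal leg stays in `Ω` because below height `0`
the domain contains the whole strip `(-3, 3) × (-1, 0)`, while above it the two towers are
`2` apart, so two points less than `1` apart lie in the same tower. The polygon has length
`|x₀ - y₀| + |x₁ - y₁| ≤ √2 |x - y|`.
-/

section Curves

variable {E : Type*}

lemma LipschitzWith.ite_le [PseudoMetricSpace E] {f g : ℝ → E} {a : ℝ}
    (hf : LipschitzWith 1 f) (hg : LipschitzWith 1 g) (hfg : f a = g a) :
    LipschitzWith 1 (fun s => if s ≤ a then f s else g s) := by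
  refine LipschitzWith.of_dist_le_mul fun s t => ?_
  wlog hst : s ≤ t generalizing s t
  · rw [dist_comm, dist_comm s]
    exact this t s (le_of_not_ge hst)
  have hf' := hf.dist_le_mul
  have hg' := hg.dist_le_mul
  simp only [NNReal.coe_one, one_mul, Real.dist_eq] at hf' hg' ⊢
  by_cases hs : s ≤ a <;> by_cases ht : t ≤ a <;> simp only [hs, ht, if_true, if_false]
  · exact hf' s t
  · calc dist (f s) (g t) ≤ dist (f s) (f a) + dist (g a) (g t) := hfg ▸ dist_triangle _ _ _
      _ ≤ |s - a| + |a - t| := add_le_add (hf' s a) (hg' a t)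
      _ = |s - t| := by
        rw [abs_of_nonpos (by linarith), abs_of_nonpos (by linarith), abs_of_nonpos (by linarith)]
        ring
  · exact absurd (hst.trans ht) hs
  · exact hg' s t

def JoinedByCurveIn [PseudoMetricSpace E] (Ω : Set E) (ℓ : ℝ) (x y : E) : Prop :=
  0 ≤ ℓ ∧ ∃ γ : ℝ → E, LipschitzWith 1 γ ∧ γ 0 = x ∧ γ ℓ = y ∧ ∀ s ∈ Icc 0 ℓ, γ s ∈ Ω

lemma JoinedByCurveIn.trans [PseudoMetricSpace E] {Ω : Set E} {ℓ₁ ℓ₂ : ℝ} {x y z : E}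
    (h₁ : JoinedByCurveIn Ω ℓ₁ x y) (h₂ : JoinedByCurveIn Ω ℓ₂ y z) :
    JoinedByCurveIn Ω (ℓ₁ + ℓ₂) x z := by
  obtain ⟨hℓ₁, γ₁, hγ₁, hγ₁0, hγ₁ℓ, hγ₁Ω⟩ := h₁
  obtain ⟨hℓ₂, γ₂, hγ₂, hγ₂0, hγ₂ℓ, hγ₂Ω⟩ := h₂
  have hshift : LipschitzWith 1 fun s => γ₂ (s - ℓ₁) := LipschitzWith.of_dist_le_mul
    fun s t => by simpa [dist_sub_right] using hγ₂.dist_le_mul (s - ℓ₁) (t - ℓ₁)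
  refine ⟨add_nonneg hℓ₁ hℓ₂, fun s => if s ≤ ℓ₁ then γ₁ s else γ₂ (s - ℓ₁),
    hγ₁.ite_le hshift (by simp [hγ₁ℓ, hγ₂0]), by simp [hℓ₁, hγ₁0], ?_, ?_⟩
  · rcases hℓ₂.eq_or_lt with rfl | hpos
    · simp [hγ₁ℓ, ← hγ₂0, hγ₂ℓ]
    · simp [not_le.mpr (lt_add_of_pos_right ℓ₁ hpos), hγ₂ℓ]
  · rintro s ⟨hs0, hsℓ⟩
    by_cases hs : s ≤ ℓ₁
    · simpa [hs] using hγ₁Ω s ⟨hs0, hs⟩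
    · simpa [hs] using hγ₂Ω (s - ℓ₁) ⟨by linarith, by linarith⟩

lemma joinedByCurveIn_of_segment_subset [NormedAddCommGroup E] [NormedSpace ℝ E] {Ω : Set E}
    {x y : E} (h : segment ℝ x y ⊆ Ω) : JoinedByCurveIn Ω (dist x y) x y := by
  refine ⟨dist_nonneg, fun s => AffineMap.lineMap x y (s / dist x y), ?_, by simp, ?_, ?_⟩
  · refine LipschitzWith.of_dist_le_mul fun s t => ?_
    rcases eq_or_ne (dist x y) 0 with hxy | hxy
    · simp [hxy]
    · rw [dist_lineMap_lineMap, Real.dist_eq, Real.dist_eq, ← sub_div, abs_div,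
        abs_of_nonneg dist_nonneg, div_mul_cancel₀ _ hxy, NNReal.coe_one, one_mul]
  · rcases eq_or_ne (dist x y) 0 with hxy | hxy
    · simp [dist_eq_zero.mp hxy]
    · simp [hxy]
  · rintro s ⟨hs0, hsℓ⟩
    refine h (segment_eq_image_lineMap ℝ x y ▸ mem_image_of_mem _ ⟨by positivity, ?_⟩)
    exact div_le_one_of_le₀ hsℓ dist_nonneg

end Curves

lemma QuasiConvex.of_joinedByCurveIn {n : ℕ} {Ω : Set (EuclideanSpace ℝ (Fin n))} {K δ : ℝ}
    (h : ∀ x ∈ Ω, ∀ y ∈ Ω, dist x y < δ → ∃ ℓ ≤ K * dist x y, JoinedByCurveIn Ω ℓ x y) :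
    QuasiConvex Ω K δ := by
  intro x hx y hy hxy
  obtain ⟨ℓ, hℓK, hℓ, hγ⟩ := h x hx y hy hxy
  exact ⟨ℓ, hℓ, hℓK, hγ⟩

section Plane

local notation "ℝ²" => EuclideanSpace ℝ (Fin 2)

def planeRect (I J : Set ℝ) : Set ℝ² := {p | p 0 ∈ I ∧ p 1 ∈ J}

lemma convex_planeRect {I J : Set ℝ} (hI : I.OrdConnected) (hJ : J.OrdConnected) :
    Convex ℝ (planeRect I J) :=
  (hI.convex.linear_preimage (EuclideanSpace.proj 0 : ℝ² →L[ℝ] ℝ).toLinearMap).inter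
    (hJ.convex.linear_preimage (EuclideanSpace.proj 1 : ℝ² →L[ℝ] ℝ).toLinearMap)

lemma dist_eq_sqrt_sq_add_sq (p q : ℝ²) : dist p q = √((p 0 - q 0) ^ 2 + (p 1 - q 1) ^ 2) := by
  simp [EuclideanSpace.dist_eq, Fin.sum_univ_two, Real.dist_eq, sq_abs]

lemma abs_sub_add_abs_sub_le_sqrt_two_mul_dist (p q : ℝ²) :
    |p 0 - q 0| + |p 1 - q 1| ≤ √2 * dist p q := by
  rw [dist_eq_sqrt_sq_add_sq, ← Real.sqrt_mul zero_le_two]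
  refine Real.le_sqrt_of_sq_le ?_
  nlinarith [sq_nonneg (|p 0 - q 0| - |p 1 - q 1|), sq_abs (p 0 - q 0), sq_abs (p 1 - q 1)]

lemma dist_vertical (p : ℝ²) (t : ℝ) : dist p !₂[p 0, t] = |p 1 - t| := by
  simp [dist_eq_sqrt_sq_add_sq, Real.sqrt_sq_eq_abs]

lemma dist_horizontal (a b t : ℝ) : dist (!₂[a, t] : ℝ²) !₂[b, t] = |a - b| := by
  simp [dist_eq_sqrt_sq_add_sq, Real.sqrt_sq_eq_abs]

lemma segment_vertical_subset_planeRect {I J : Set ℝ} (hI : I.OrdConnected) (hJ : J.OrdConnected)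
    {p : ℝ²} (hp : p ∈ planeRect I J) {t : ℝ} (ht : t ∈ J) :
    segment ℝ p !₂[p 0, t] ⊆ planeRect I J :=
  (convex_planeRect hI hJ).segment_subset hp ⟨by simpa using hp.1, by simpa using ht⟩

def towers : Set ℝ² :=
  planeRect (Ioo (-3) (-1)) (Ioi (-1)) ∪ planeRect (Ioo 1 3) (Ioi (-1)) ∪
    planeRect (Icc (-1) 1) (Ioo (-1) 0)

lemma neg_one_lt_of_mem_towers {p : ℝ²} (hp : p ∈ towers) : -1 < p 1 := by
  rcases hp with (hp | hp) | hp
  exacts [hp.2, hp.2, hp.2.1]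

lemma segment_vertical_subset_towers {p : ℝ²} (hp : p ∈ towers) {t : ℝ} (ht : -1 < t)
    (htp : t ≤ p 1) : segment ℝ p !₂[p 0, t] ⊆ towers := by
  rcases hp with (hp | hp) | hp
  · exact (segment_vertical_subset_planeRect ordConnected_Ioo ordConnected_Ioi hp ht).trans
      (subset_union_left.trans subset_union_left)
  · exact (segment_vertical_subset_planeRect ordConnected_Ioo ordConnected_Ioi hp ht).trans
      (subset_union_right.trans subset_union_left)
  · exact (segment_vertical_subset_planeRect ordConnected_Icc ordConnected_Ioo hp
      ⟨ht, htp.trans_lt hp.2.2⟩).trans subset_union_right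

lemma segment_horizontal_subset_towers {p q : ℝ²} (hp : p ∈ towers) (hq : q ∈ towers)
    (hpq : p 1 = q 1) (hdist : |p 0 - q 0| < 1) : segment ℝ p q ⊆ towers := by
  rw [abs_lt] at hdist
  by_cases hneg : p 1 < 0
  · have hbridge : ∀ r ∈ towers, r 1 < 0 → r ∈ planeRect (Ioo (-3) 3) (Ioo (-1) 0) := by
      rintro r ((⟨⟨h₁, h₂⟩, h₃⟩ | ⟨⟨h₁, h₂⟩, h₃⟩) | ⟨⟨h₁, h₂⟩, h₃⟩) hr
      · exact ⟨⟨h₁, by linarith⟩, h₃, hr⟩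
      · exact ⟨⟨by linarith, h₂⟩, h₃, hr⟩
      · exact ⟨⟨by linarith, by linarith⟩, h₃⟩
    refine ((convex_planeRect ordConnected_Ioo ordConnected_Ioo).segment_subset
      (hbridge p hp hneg) (hbridge q hq (hpq ▸ hneg))).trans ?_
    rintro r ⟨⟨h₁, h₂⟩, h₃, h₄⟩
    rcases lt_or_ge (r 0) (-1) with hl | hl
    · exact Or.inl (Or.inl ⟨⟨h₁, hl⟩, h₃⟩)
    rcases le_or_gt (r 0) 1 with hr | hr
    · exact Or.inr ⟨⟨hl, hr⟩, h₃, h₄⟩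
    · exact Or.inl (Or.inr ⟨⟨hr, h₂⟩, h₃⟩)
  · rw [not_lt] at hneg
    rcases hp with (hp | hp) | hp
    · rcases hq with (hq | hq) | hq
      · exact ((convex_planeRect ordConnected_Ioo ordConnected_Ioi).segment_subset hp hq).trans
          (subset_union_left.trans subset_union_left)
      · linarith [hp.1.2, hq.1.1]
      · linarith [hq.2.2]
    · rcases hq with (hq | hq) | hq
      · linarith [hp.1.1, hq.1.2]
      · exact ((convex_planeRect ordConnected_Ioo ordConnected_Ioi).segment_subset hp hq).trans
          (subset_union_right.trans subset_union_left)
      · linarith [hq.2.2]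
    · linarith [hp.2.2]

theorem quasiConvex_towers : QuasiConvex towers √2 1 := by
  refine QuasiConvex.of_joinedByCurveIn fun x hx y hy hxy => ?_
  set m := min (x 1) (y 1)
  have hm : -1 < m := lt_min (neg_one_lt_of_mem_towers hx) (neg_one_lt_of_mem_towers hy)
  have hxh : segment ℝ x !₂[x 0, m] ⊆ towers :=
    segment_vertical_subset_towers hx hm (min_le_left _ _)
  have hyh : segment ℝ y !₂[y 0, m] ⊆ towers :=
    segment_vertical_subset_towers hy hm (min_le_right _ _)
  have hbase : segment ℝ !₂[x 0, m] !₂[y 0, m] ⊆ towers :=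
    segment_horizontal_subset_towers (hxh (right_mem_segment ..)) (hyh (right_mem_segment ..))
      (by simp) (by simpa [Real.dist_eq] using (PiLp.dist_apply_le x y 0).trans_lt hxy)
  refine ⟨_, ?_, ((joinedByCurveIn_of_segment_subset hxh).trans
    (joinedByCurveIn_of_segment_subset hbase)).trans
    (joinedByCurveIn_of_segment_subset (segment_symm ℝ y _ ▸ hyh))⟩
  rw [dist_vertical, dist_horizontal, dist_comm, dist_vertical,
    abs_of_nonneg (sub_nonneg.2 (min_le_left (x 1) (y 1))),
    abs_of_nonneg (sub_nonneg.2 (min_le_right (x 1) (y 1)))]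
  linarith [abs_sub_add_abs_sub_le_sqrt_two_mul_dist x y, max_sub_min_eq_abs' (x 1) (y 1),
    min_add_max (x 1) (y 1)]

end Plane

theorem stmt_13
    (U V W Ω : Set (EuclideanSpace ℝ (Fin 2)))
    (hU : U = {p | -3 < p 0 ∧ p 0 < -1 ∧ -1 < p 1})
    (hV : V = {p | 1 < p 0 ∧ p 0 < 3 ∧ -1 < p 1})
    (hW : W = {p | -1 ≤ p 0 ∧ p 0 ≤ 1 ∧ -1 < p 1 ∧ p 1 < 0})
    (hΩ : Ω = U ∪ V ∪ W) :
    QuasiConvex Ω (Real.sqrt 2) 1 := by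
  have hΩ_eq : Ω = towers := by
    ext p
    simp [hΩ, hU, hV, hW, towers, planeRect, and_assoc]
  exact hΩ_eq ▸ quasiConvex_towers
end
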